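/- Let V be finite, b a vertex, a != b with p(b,a)=1, and k(v) = E_v[T_b] the expected hitting time of b. Define K_2 := max_v k(v) + (1/2) sum_{u != b, v in V} d(u) p(u,v) |k(u)-k(v)-1|. Then for any rotor walk started at a and any t with n_t(b)>0, |(k(a)+1) - t/n_t(b)| <= K_2/n_t(b). -/

import Mathlib

open scoped BigOperators Classical

/-- `(x, r)` is a rotor walk for the rotor mechanism `(d, succ)`.  Rotor values are
`0`-based: rotor value `j` at `u` means the rotor points to `succ u j`
(corresponding to `u^(j+1)` in `1`-based notation).  At each step the rotor at the
current particle position is incremented cyclically and the particle moves in the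
new rotor direction. -/
def IsRotorWalk {V : Type*} (d : V → ℕ) (succ : V → ℕ → V)
    (x : ℕ → V) (r : ℕ → V → ℕ) : Prop :=
  (∀ v, r 0 v < d v) ∧
  (∀ t, r (t + 1) (x t) = (r t (x t) + 1) % d (x t)) ∧
  (∀ t v, v ≠ x t → r (t + 1) v = r t v) ∧
  (∀ t, x (t + 1) = succ (x t) (r (t + 1) (x t)))

/-- the number of visits of the walk `x` to `v` strictly before time `t` -/
noncomputable def nvisits {V : Type*} (x : ℕ → V) (t : ℕ) (v : V) : ℕ :=
  ((Finset.range t).filter fun s => x s = v).card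

/-- the rotor mechanism `(d, succ)` realizes the transition kernel `p`:
`p u v` is the proportion of the `d u` successors of `u` equal to `v` -/
def Realizes {V : Type*} (d : V → ℕ) (succ : V → ℕ → V) (p : V → V → ℝ) : Prop :=
  (∀ u, 0 < d u) ∧
  ∀ u v, p u v = ((Finset.range (d u)).filter fun i => succ u i = v).card / d u

/-!
Telescope `k` along the walk: a step from `b` (to `a`) changes `k` by `(k a + 1) - 1`, a step
`u → w` with `u ≠ b` by `-1 - (k u - k w - 1)`. Hence `n_t(b) (k a + 1) - t` equals
`k (x t) - k a`, which lies in `[-max k, max k]` because `k ≥ 0`, plus, for each `u ≠ b`, a partial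
sum of the weights `k u - k w - 1` over the successive exits from `u`. The rotor at `u` runs
through its `d u` successors cyclically, and by the equation for `k u` these weights sum to zero
over one turn of the rotor, so each partial sum is at most half of
`∑_v d u * p u v * |k u - k v - 1|`.
-/

open Finset

theorem Function.Periodic.sum_range_add_left {M : Type*} [AddCancelCommMonoid M] {g : ℕ → M}
    {n : ℕ} (hg : Function.Periodic g n) (c : ℕ) :
    ∑ i ∈ range n, g (c + i) = ∑ i ∈ range n, g i := by
  induction c with
  | zero => simp
  | succ c ih =>
    have h := sum_range_succ' (fun i => g (c + i)) n
    rw [sum_range_succ, hg c, add_zero] at h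
    rw [← ih, add_right_cancel h]
    exact sum_congr rfl fun i _ => congrArg g (by omega)

/-- The partial sum up to `m % n` is minus the sum over the rest of the period. -/
theorem Function.Periodic.abs_sum_range_le {g : ℕ → ℝ} {n : ℕ} (hg : Function.Periodic g n)
    (hn : 0 < n) (hsum : ∑ i ∈ range n, g i = 0) (m : ℕ) :
    |∑ i ∈ range m, g i| ≤ (1 / 2) * ∑ i ∈ range n, |g i| := by
  have hS : Function.Periodic (fun m => ∑ i ∈ range m, g i) n := fun m => by
    simp only [sum_range_add, hg.sum_range_add_left, hsum, add_zero]
  rw [← hS.map_mod_nat]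
  have hm : m % n ≤ n := (Nat.mod_lt m hn).le
  have hsplit := sum_range_add_sum_Ico g hm
  have hsplit_abs := sum_range_add_sum_Ico (fun i => |g i|) hm
  have hhead := abs_sum_le_sum_abs g (range (m % n))
  have htail : |∑ i ∈ range (m % n), g i| ≤ ∑ i ∈ Ico (m % n) n, |g i| := by
    rw [eq_neg_of_add_eq_zero_left (hsplit.trans hsum), abs_neg]
    exact abs_sum_le_sum_abs g _
  linarith

theorem abs_sum_range_mod_le {h : ℕ → ℝ} {n : ℕ} (hn : 0 < n)
    (hsum : ∑ j ∈ range n, h j = 0) (c m : ℕ) :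
    |∑ i ∈ range m, h ((c + i) % n)| ≤ (1 / 2) * ∑ j ∈ range n, |h j| := by
  have hshift : ∀ φ : ℕ → ℝ, ∑ i ∈ range n, φ ((c + i) % n) = ∑ j ∈ range n, φ j := by
    intro φ
    have hper : Function.Periodic (fun i => φ (i % n)) n := fun i => by
      simp only [Nat.add_mod_right]
    refine (hper.sum_range_add_left c).trans (sum_congr rfl fun i hi => ?_)
    rw [Nat.mod_eq_of_lt (mem_range.mp hi)]
  have hper : Function.Periodic (fun i => h ((c + i) % n)) n := fun i => by
    simp only [← add_assoc, Nat.add_mod_right]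
  have := hper.abs_sum_range_le hn (by rw [hshift, hsum]) m
  rwa [hshift fun j => |h j|] at this

theorem nvisits_zero {V : Type*} (x : ℕ → V) (v : V) : nvisits x 0 v = 0 := by
  simp [nvisits]

theorem nvisits_succ {V : Type*} (x : ℕ → V) (s : ℕ) (v : V) :
    nvisits x (s + 1) v = nvisits x s v + if x s = v then 1 else 0 := by
  simp only [nvisits, range_add_one, filter_insert]
  split_ifs with h
  · rw [card_insert_of_notMem (by simp)]
  · rfl

section RotorWalk

variable {V : Type*} {d : V → ℕ} {succ : V → ℕ → V} {x : ℕ → V} {r : ℕ → V → ℕ}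

namespace IsRotorWalk

theorem rotor_eq (hw : IsRotorWalk d succ x r) (s : ℕ) (u : V) :
    r s u = (r 0 u + nvisits x s u) % d u := by
  induction s generalizing u with
  | zero => rw [nvisits_zero, add_zero, Nat.mod_eq_of_lt (hw.1 u)]
  | succ s ih =>
    by_cases hu : u = x s
    · subst hu
      rw [hw.2.1 s, ih, nvisits_succ, if_pos rfl, Nat.mod_add_mod, add_assoc]
    · rw [hw.2.2.1 s u hu, ih, nvisits_succ, if_neg (Ne.symm hu), add_zero]

theorem next_eq (hw : IsRotorWalk d succ x r) (s : ℕ) :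
    x (s + 1) = succ (x s) ((r 0 (x s) + 1 + nvisits x s (x s)) % d (x s)) := by
  rw [hw.2.2.2 s, hw.2.1 s, hw.rotor_eq, Nat.mod_add_mod, add_right_comm]

theorem exists_next_eq (hw : IsRotorWalk d succ x r) (s : ℕ) :
    ∃ i < d (x s), x (s + 1) = succ (x s) i :=
  ⟨_, Nat.mod_lt _ ((Nat.zero_le _).trans_lt (hw.1 (x s))), hw.next_eq s⟩

/-- The `j`-th exit of the walk from `u` follows rotor direction `r 0 u + 1 + j`. -/
theorem sum_range_edge_eq [Fintype V] {M : Type*} [AddCommMonoid M]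
    (hw : IsRotorWalk d succ x r) (c : V → V → M) (T : ℕ) :
    ∑ s ∈ range T, c (x s) (x (s + 1)) =
      ∑ u, ∑ j ∈ range (nvisits x T u), c u (succ u ((r 0 u + 1 + j) % d u)) := by
  induction T with
  | zero => simp [nvisits_zero]
  | succ T ih =>
    have hstep : ∀ u, ∑ j ∈ range (nvisits x (T + 1) u), c u (succ u ((r 0 u + 1 + j) % d u)) =
        ∑ j ∈ range (nvisits x T u), c u (succ u ((r 0 u + 1 + j) % d u)) +
          if x T = u then c (x T) (x (T + 1)) else 0 := by
      intro u
      by_cases hu : x T = u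
      · subst hu
        rw [nvisits_succ, if_pos rfl, if_pos rfl, sum_range_succ, ← hw.next_eq]
      · rw [nvisits_succ, if_neg hu, if_neg hu, add_zero, add_zero]
    simp only [hstep, sum_add_distrib, sum_ite_eq, mem_univ, if_true, sum_range_succ, ih]

end IsRotorWalk

end RotorWalk

section Kernel

variable {V : Type*} {d : V → ℕ} {succ : V → ℕ → V} {p : V → V → ℝ}

namespace Realizes

theorem nonneg (hreal : Realizes d succ p) (u v : V) : 0 ≤ p u v := by
  rw [hreal.2 u v]
  positivity

theorem succ_eq_of_eq_one (hreal : Realizes d succ p) {u v : V} (huv : p u v = 1) {i : ℕ}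
    (hi : i < d u) : succ u i = v := by
  have hd : (d u : ℝ) ≠ 0 := Nat.cast_ne_zero.mpr (hreal.1 u).ne'
  rw [hreal.2 u v, div_eq_one_iff_eq hd, Nat.cast_inj] at huv
  exact filter_card_eq (huv.trans (card_range _).symm) i (mem_range.mpr hi)

theorem sum_range_succ_eq [Fintype V] (hreal : Realizes d succ p) (u : V) (g : V → ℝ) :
    ∑ i ∈ range (d u), g (succ u i) = d u * ∑ v, p u v * g v := by
  have hd : (d u : ℝ) ≠ 0 := Nat.cast_ne_zero.mpr (hreal.1 u).ne'
  rw [← sum_fiberwise_of_maps_to (fun i _ => mem_univ (succ u i)), mul_sum]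
  refine sum_congr rfl fun v _ => ?_
  rw [sum_congr rfl fun i hi => congrArg g (mem_filter.mp hi).2, sum_const, nsmul_eq_mul,
    hreal.2 u v]
  field_simp

theorem sum_eq_one [Fintype V] (hreal : Realizes d succ p) (u : V) : ∑ v, p u v = 1 := by
  have hd : (d u : ℝ) ≠ 0 := Nat.cast_ne_zero.mpr (hreal.1 u).ne'
  have h := hreal.sum_range_succ_eq u fun _ => 1
  simp only [sum_const, card_range, nsmul_eq_mul, mul_one] at h
  exact (mul_eq_left₀ hd).mp h.symm

end Realizes

variable [Fintype V]

/-- Minimum principle: at a minimiser `u ≠ b` the equation would give `k u ≥ 1 + k u`. -/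
theorem hitting_nonneg (hp0 : ∀ u v, 0 ≤ p u v) (hp1 : ∀ u, ∑ v, p u v = 1)
    {b : V} {k : V → ℝ} (hkb : k b = 0) (hk : ∀ u, u ≠ b → k u = 1 + ∑ v, p u v * k v)
    (v : V) : 0 ≤ k v := by
  obtain ⟨u, -, hmin⟩ := exists_min_image univ k ⟨b, mem_univ b⟩
  refine le_trans ?_ (hmin v (mem_univ v))
  by_cases hub : u = b
  · rw [hub, hkb]
  · have : k u ≤ ∑ v, p u v * k v :=
      calc k u = ∑ v, p u v * k u := by rw [← sum_mul, hp1, one_mul]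
        _ ≤ ∑ v, p u v * k v :=
          sum_le_sum fun v _ => mul_le_mul_of_nonneg_left (hmin v (mem_univ v)) (hp0 u v)
    linarith [hk u hub]

theorem abs_sum_range_drift_le (hreal : Realizes d succ p) {b : V} {k : V → ℝ}
    (hk : ∀ u, u ≠ b → k u = 1 + ∑ v, p u v * k v) (u : V) (c m : ℕ) :
    |∑ j ∈ range m, if u = b then 0 else k u - k (succ u ((c + j) % d u)) - 1| ≤
      (1 / 2) * ∑ v, if u = b then 0 else (d u : ℝ) * p u v * |k u - k v - 1| := by
  by_cases hub : u = b
  · simp [hub]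
  simp only [if_neg hub]
  have hcycle : ∑ j ∈ range (d u), (k u - k (succ u j) - 1) = 0 := by
    rw [hreal.sum_range_succ_eq u fun w => k u - k w - 1]
    simp only [mul_sub, sum_sub_distrib, ← sum_mul, hreal.sum_eq_one]
    rw [hk u hub]
    ring
  refine (abs_sum_range_mod_le (hreal.1 u) hcycle c m).trans_eq ?_
  rw [hreal.sum_range_succ_eq u fun w => |k u - k w - 1|, mul_sum]
  simp only [mul_assoc]

end Kernel

theorem nvisits_mul_sub_eq {V : Type*} {x : ℕ → V} {a b : V}
    (hret : ∀ s, x s = b → x (s + 1) = a) {k : V → ℝ} (hkb : k b = 0) (T : ℕ) :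
    (nvisits x T b : ℝ) * (k a + 1) - T = k (x T) - k (x 0) +
      ∑ s ∈ range T, if x s = b then 0 else k (x s) - k (x (s + 1)) - 1 := by
  have hstep : ∀ s, k (x (s + 1)) - k (x s) = (if x s = b then k a + 1 else 0) - 1 -
      if x s = b then 0 else k (x s) - k (x (s + 1)) - 1 := by
    intro s
    by_cases hs : x s = b
    · rw [if_pos hs, if_pos hs, hret s hs, hs, hkb]
      ring
    · simp only [if_neg hs]
      ring
  have htel := sum_range_sub (fun s => k (x s)) T
  simp only [hstep, sum_sub_distrib, ← sum_filter, sum_const, card_range, nsmul_eq_mul,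
    mul_one] at htel
  rw [nvisits]
  linarith

theorem rotor_hitting_time_general {V : Type*} [Fintype V]
    (d : V → ℕ) (succ : V → ℕ → V) (p : V → V → ℝ)
    (hreal : Realizes d succ p)
    (a b : V) (hpb : p b a = 1)
    (k : V → ℝ) (hkb : k b = 0)
    (hk : ∀ u, u ≠ b → k u = 1 + ∑ v, p u v * k v)
    (K₂ : ℝ)
    (hK₂ : K₂ = (⨆ v, k v) + (1 / 2) * ∑ u, ∑ v,
      (if u = b then 0 else (d u : ℝ) * p u v * |k u - k v - 1|))
    (x : ℕ → V) (r : ℕ → V → ℕ) (hwalk : IsRotorWalk d succ x r) (hx0 : x 0 = a)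
    (t : ℕ) (hn : 0 < nvisits x t b) :
    |(k a + 1) - (t : ℝ) / (nvisits x t b : ℝ)| ≤ K₂ / (nvisits x t b : ℝ) := by
  have hret : ∀ s, x s = b → x (s + 1) = a := fun s hs => by
    obtain ⟨i, hi, hnext⟩ := hwalk.exists_next_eq s
    rw [hnext, hs]
    exact hreal.succ_eq_of_eq_one hpb (hs ▸ hi)
  have hk0 := hitting_nonneg hreal.nonneg hreal.sum_eq_one hkb hk
  have hksup (v : V) : k v ≤ ⨆ v, k v := le_ciSup (Set.finite_range k).bddAbove v
  have hN : (0 : ℝ) < nvisits x t b := by exact_mod_cast hn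
  have hkey : |(nvisits x t b : ℝ) * (k a + 1) - t| ≤ K₂ := by
    rw [nvisits_mul_sub_eq hret hkb, hwalk.sum_range_edge_eq
      (fun u w => if u = b then 0 else k u - k w - 1), hx0, hK₂, mul_sum]
    refine (abs_add_le _ _).trans (add_le_add ?_ ((abs_sum_le_sum_abs _ _).trans ?_))
    · exact abs_sub_le_of_nonneg_of_le (hk0 _) (hksup _) (hk0 a) (hksup a)
    · exact sum_le_sum fun u _ => abs_sum_range_drift_le hreal hk u _ _
  have hdiv : (k a + 1) - (t : ℝ) / nvisits x t b =
      (nvisits x t b * (k a + 1) - t) / nvisits x t b := by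
    field_simp
  rw [hdiv, abs_div, abs_of_pos hN]
  gcongr

/-- **Hitting times** (Theorem `hit-time`).  `V` is finite; `k(v) = E_v T_b` is
characterized by `k(b) = 0` and `k(u) = 1 + ∑_v p(u,v) k(v)` for `u ≠ b`. -/
theorem rotor_hitting_time {V : Type*} [Fintype V]
    (d : V → ℕ) (succ : V → ℕ → V) (p : V → V → ℝ)
    (hreal : Realizes d succ p)
    (a b : V) (hab : a ≠ b) (hpb : p b a = 1)
    (k : V → ℝ) (hkb : k b = 0)
    (hk : ∀ u, u ≠ b → k u = 1 + ∑ v, p u v * k v)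
    (K₂ : ℝ)
    (hK₂ : K₂ = (⨆ v, k v) + (1 / 2) * ∑ u, ∑ v,
      (if u = b then 0 else (d u : ℝ) * p u v * |k u - k v - 1|))
    (x : ℕ → V) (r : ℕ → V → ℕ) (hwalk : IsRotorWalk d succ x r) (hx0 : x 0 = a)
    (t : ℕ) (hn : 0 < nvisits x t b) :
    |(k a + 1) - (t : ℝ) / (nvisits x t b : ℝ)| ≤ K₂ / (nvisits x t b : ℝ) :=
  rotor_hitting_time_general d succ p hreal a b hpb k hkb hk K₂ hK₂ x r hwalk hx0 t hn
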